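/- Let X, Y be positively associated random variables both bounded above almost surely by a constant c > 0 and with finite second moments. Then Cov(log X, log Y) ≥ Cov(X, Y) / (2c²), assuming X, Y > 0 a.s. and log X, log Y square-integrable. -/
import Mathlib


open MeasureTheory Filter Topology

lemma aux_log_sub_div_mono {c a b : ℝ} (ha : 0 < a) (hab : a ≤ b) (hbc : b ≤ c) :
    Real.log a - a / c ≤ Real.log b - b / c := by
  have hb : 0 < b := ha.trans_le hab
  have h1 : Real.log a - Real.log b ≤ a / b - 1 := by
    have := Real.log_le_sub_one_of_pos (div_pos ha hb)
    rwa [Real.log_div ha.ne' hb.ne'] at this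
  have h2 : (b - a) / c ≤ (b - a) / b :=
    div_le_div_of_nonneg_left (by linarith) hb hbc
  have h3 : (b - a) / b = 1 - a / b := by field_simp
  have h4 : a / c = b / c - (b - a) / c := by ring
  rw [h3] at h2
  linarith

lemma aux_abs_log_le {p x q : ℝ} (hp : 0 < p) (hpx : p ≤ x) (hxq : x ≤ q) :
    |Real.log x| ≤ |Real.log p| + |Real.log q| := by
  rcases abs_cases (Real.log x) with ⟨h, _⟩ | ⟨h, _⟩
  · rw [h]
    have : Real.log x ≤ Real.log q := Real.log_le_log (hp.trans_le hpx) hxq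
    have := le_abs_self (Real.log q)
    have := abs_nonneg (Real.log p)
    linarith
  · rw [h]
    have : Real.log p ≤ Real.log x := Real.log_le_log hp hpx
    have := neg_abs_le (Real.log p)
    have := abs_nonneg (Real.log q)
    linarith

lemma aux_int_of_bdd {Ω : Type*} [MeasureSpace Ω] [IsProbabilityMeasure (volume : Measure Ω)]
    {f : Ω → ℝ} (hf : AEStronglyMeasurable f (volume : Measure Ω)) {M : ℝ}
    (h : ∀ᵐ ω ∂(volume : Measure Ω), |f ω| ≤ M) : Integrable f :=
  (integrable_const M).mono' hf (by simpa [Real.norm_eq_abs] using h)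

/-- `X` and `Y` are positively associated: `Cov(h(X,Y), g(X,Y)) ≥ 0` for every
pair of coordinatewise-nondecreasing functions `h, g` for which the covariance
exists. -/
def PosAssocPair {Ω : Type*} [MeasureSpace Ω] (X Y : Ω → ℝ) : Prop :=
  ∀ h g : ℝ × ℝ → ℝ, Monotone h → Monotone g →
    Integrable (fun ω => h (X ω, Y ω)) →
    Integrable (fun ω => g (X ω, Y ω)) →
    Integrable (fun ω => h (X ω, Y ω) * g (X ω, Y ω)) →
    (∫ ω, h (X ω, Y ω)) * (∫ ω, g (X ω, Y ω)) ≤ ∫ ω, h (X ω, Y ω) * g (X ω, Y ω)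

/-- Lower bound for the covariance of logarithms of positively associated, bounded,
positive random variables (following Bulinski–Shashkin, Theorem 5.3):
`Cov(log X, log Y) ≥ Cov(X, Y)/(2c²)`. -/
theorem cov_log_ge_of_posAssoc {Ω : Type*} [MeasureSpace Ω]
    [IsProbabilityMeasure (volume : Measure Ω)]
    (X Y : Ω → ℝ) (hXmeas : Measurable X) (hYmeas : Measurable Y)
    (hPA : PosAssocPair X Y)
    (c : ℝ) (hc : 0 < c)
    (hXpos : ∀ᵐ ω ∂(volume : Measure Ω), 0 < X ω)
    (hYpos : ∀ᵐ ω ∂(volume : Measure Ω), 0 < Y ω)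
    (hXbdd : ∀ᵐ ω ∂(volume : Measure Ω), X ω ≤ c)
    (hYbdd : ∀ᵐ ω ∂(volume : Measure Ω), Y ω ≤ c)
    (hX2 : Integrable (fun ω => X ω ^ 2)) (hY2 : Integrable (fun ω => Y ω ^ 2))
    (hlogX2 : Integrable (fun ω => Real.log (X ω) ^ 2))
    (hlogY2 : Integrable (fun ω => Real.log (Y ω) ^ 2)) :
    ((∫ ω, X ω * Y ω) - (∫ ω, X ω) * ∫ ω, Y ω) / (2 * c ^ 2) ≤
      (∫ ω, Real.log (X ω) * Real.log (Y ω)) -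
        (∫ ω, Real.log (X ω)) * ∫ ω, Real.log (Y ω) := by
  have hXae : ∀ᵐ ω ∂(volume : Measure Ω), 0 < X ω ∧ X ω ≤ c := hXpos.and hXbdd
  have hYae : ∀ᵐ ω ∂(volume : Measure Ω), 0 < Y ω ∧ Y ω ≤ c := hYpos.and hYbdd
  -- measurability of logs
  have hlXm : Measurable fun ω => Real.log (X ω) := Real.measurable_log.comp hXmeas
  have hlYm : Measurable fun ω => Real.log (Y ω) := Real.measurable_log.comp hYmeas
  -- |log X| integrable
  have habs_int : ∀ (f : Ω → ℝ), Measurable f → Integrable (fun ω => f ω ^ 2) →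
      Integrable (fun ω => |f ω|) := by
    intro f hf h2
    have hI : Integrable (fun ω => (f ω ^ 2 + 1) / 2) :=
      (h2.add (integrable_const 1)).div_const 2
    refine hI.mono' hf.abs.aestronglyMeasurable ?_
    filter_upwards with ω
    rw [Real.norm_eq_abs, abs_abs]
    nlinarith [sq_nonneg (|f ω| - 1), sq_abs (f ω)]
  have hAX : Integrable fun ω => |Real.log (X ω)| := habs_int _ hlXm hlogX2
  have hAY : Integrable fun ω => |Real.log (Y ω)| := habs_int _ hlYm hlogY2
  -- clamp sequence
  set e : ℕ → ℝ := fun n => c / (n + 1) with he_def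
  have he_pos : ∀ n : ℕ, 0 < e n := fun n => div_pos hc (by positivity)
  have he_le : ∀ n : ℕ, e n ≤ c := fun n => by
    rw [he_def]
    exact div_le_self hc.le (by simp [le_add_iff_nonneg_left])
  have he_tendsto : Tendsto e atTop (𝓝 0) := by
    apply Tendsto.div_atTop (tendsto_const_nhds (x := c))
    exact tendsto_atTop_add_const_right _ 1 tendsto_natCast_atTop_atTop
  set Cf : ℕ → ℝ → ℝ := fun n x => min (max x (e n)) c with hCf_def
  have hC_mono : ∀ n, Monotone (Cf n) := fun n =>
    (monotone_id.max monotone_const).min monotone_const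
  have hC_meas : ∀ n, Measurable (Cf n) := fun n =>
    (measurable_id.max measurable_const).min measurable_const
  have hC_lb : ∀ n x, e n ≤ Cf n x := fun n x => le_min (le_max_right _ _) (he_le n)
  have hC_ub : ∀ n x, Cf n x ≤ c := fun n x => min_le_right _ _
  have hC_pos : ∀ n x, 0 < Cf n x := fun n x => (he_pos n).trans_le (hC_lb n x)
  have hC_eq : ∀ n x, x ≤ c → e n ≤ x → Cf n x = x := by
    intro n x hxc hex
    rw [hCf_def]
    simp [max_eq_left hex, min_eq_left hxc]
  -- the two monotone transforms
  set ψ : ℕ → ℝ → ℝ := fun n x => Real.log (Cf n x) - Cf n x / c with hψ_def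
  set φ : ℕ → ℝ → ℝ := fun n x => Real.log (Cf n x) with hφ_def
  have hψ_mono : ∀ n, Monotone (ψ n) := by
    intro n a b hab
    exact aux_log_sub_div_mono (hC_pos n a) (hC_mono n hab) (hC_ub n b)
  have hψ_meas : ∀ n, Measurable (ψ n) := fun n =>
    ((Real.measurable_log.comp (hC_meas n)).sub ((hC_meas n).div_const c))
  have hφ_meas : ∀ n, Measurable (φ n) := fun n =>
    Real.measurable_log.comp (hC_meas n)
  have hφ_bd : ∀ n x, |φ n x| ≤ |Real.log (e n)| + |Real.log c| := fun n x =>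
    aux_abs_log_le (he_pos n) (hC_lb n x) (hC_ub n x)
  have hψ_bd : ∀ n x, |ψ n x| ≤ |Real.log (e n)| + |Real.log c| + 1 := by
    intro n x
    have h1 := hφ_bd n x
    have h2 : |Cf n x / c| ≤ 1 := by
      rw [abs_div, abs_of_pos hc, div_le_one hc, abs_of_pos (hC_pos n x)]
      exact hC_ub n x
    calc |ψ n x| ≤ |Real.log (Cf n x)| + |Cf n x / c| := abs_sub _ _
      _ ≤ |Real.log (e n)| + |Real.log c| + 1 := by
          simp only [hφ_def] at h1; linarith
  -- integrability of all the composed functions (each bounded)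
  have hMint : ∀ (f : ℝ → ℝ) (Z : Ω → ℝ), Measurable f → Measurable Z →
      (∀ x, |f x| ≤ ((|Real.log (e 0)| + |Real.log c| + 1) : ℝ) ⊔ c) →
      Integrable fun ω => f (Z ω) := by
    intro f Z hf hZ hb
    exact aux_int_of_bdd (hf.comp hZ).aestronglyMeasurable
      (Filter.Eventually.of_forall fun ω => hb (Z ω))
  have hbint : ∀ (f : Ω → ℝ) (M : ℝ), Measurable f → (∀ ω, |f ω| ≤ M) → Integrable f := by
    intro f M hm hb
    exact aux_int_of_bdd hm.aestronglyMeasurable (Filter.Eventually.of_forall hb)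
  -- key inequality per n
  have key : ∀ n : ℕ,
      ((∫ ω, Cf n (X ω) * Cf n (Y ω)) - (∫ ω, Cf n (X ω)) * ∫ ω, Cf n (Y ω)) / c ^ 2 ≤
      (∫ ω, φ n (X ω) * φ n (Y ω)) - (∫ ω, φ n (X ω)) * ∫ ω, φ n (Y ω) := by
    intro n
    set M : ℝ := |Real.log (e n)| + |Real.log c| + 1 with hM_def
    have hMc : 0 < M := by positivity
    -- integrability of each piece
    have iu : Integrable fun ω => ψ n (X ω) :=
      hbint _ M ((hψ_meas n).comp hXmeas) fun ω => hψ_bd n (X ω)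
    have iv : Integrable fun ω => ψ n (Y ω) :=
      hbint _ M ((hψ_meas n).comp hYmeas) fun ω => hψ_bd n (Y ω)
    have ip : Integrable fun ω => Cf n (X ω) :=
      hbint _ c ((hC_meas n).comp hXmeas) fun ω => by
        rw [abs_of_pos (hC_pos n (X ω))]; exact hC_ub n (X ω)
    have iq : Integrable fun ω => Cf n (Y ω) :=
      hbint _ c ((hC_meas n).comp hYmeas) fun ω => by
        rw [abs_of_pos (hC_pos n (Y ω))]; exact hC_ub n (Y ω)
    have iuv : Integrable fun ω => ψ n (X ω) * ψ n (Y ω) :=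
      hbint _ (M * M) (((hψ_meas n).comp hXmeas).mul ((hψ_meas n).comp hYmeas)) fun ω => by
        rw [abs_mul]
        exact mul_le_mul (hψ_bd n (X ω)) (hψ_bd n (Y ω)) (abs_nonneg _) hMc.le
    have iuq : Integrable fun ω => ψ n (X ω) * Cf n (Y ω) :=
      hbint _ (M * c) (((hψ_meas n).comp hXmeas).mul ((hC_meas n).comp hYmeas)) fun ω => by
        rw [abs_mul, abs_of_pos (hC_pos n (Y ω))]
        exact mul_le_mul (hψ_bd n (X ω)) (hC_ub n (Y ω)) (hC_pos n (Y ω)).le hMc.le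
    have ipv : Integrable fun ω => Cf n (X ω) * ψ n (Y ω) :=
      hbint _ (c * M) (((hC_meas n).comp hXmeas).mul ((hψ_meas n).comp hYmeas)) fun ω => by
        rw [abs_mul, abs_of_pos (hC_pos n (X ω))]
        exact mul_le_mul (hC_ub n (X ω)) (hψ_bd n (Y ω)) (abs_nonneg _) hc.le
    have ipq : Integrable fun ω => Cf n (X ω) * Cf n (Y ω) :=
      hbint _ (c * c) (((hC_meas n).comp hXmeas).mul ((hC_meas n).comp hYmeas)) fun ω => by
        rw [abs_mul, abs_of_pos (hC_pos n (X ω)), abs_of_pos (hC_pos n (Y ω))]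
        exact mul_le_mul (hC_ub n (X ω)) (hC_ub n (Y ω)) (hC_pos n (Y ω)).le hc.le
    -- PA applications
    have mono_fst : ∀ (f : ℝ → ℝ), Monotone f → Monotone (fun z : ℝ × ℝ => f z.1) :=
      fun f hf a b hab => hf hab.1
    have mono_snd : ∀ (f : ℝ → ℝ), Monotone f → Monotone (fun z : ℝ × ℝ => f z.2) :=
      fun f hf a b hab => hf hab.2
    have pa1 := hPA (fun z => ψ n z.1) (fun z => ψ n z.2)
      (mono_fst _ (hψ_mono n)) (mono_snd _ (hψ_mono n)) iu iv iuv
    have pa2 := hPA (fun z => ψ n z.1) (fun z => Cf n z.2)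
      (mono_fst _ (hψ_mono n)) (mono_snd _ (hC_mono n)) iu iq iuq
    have pa3 := hPA (fun z => Cf n z.1) (fun z => ψ n z.2)
      (mono_fst _ (hC_mono n)) (mono_snd _ (hψ_mono n)) ip iv ipv
    -- expand φ = ψ + C/c
    have hsplit : ∀ x : ℝ, φ n x = ψ n x + Cf n x / c := by
      intro x; rw [hψ_def, hφ_def]; ring
    have expand1 : (∫ ω, φ n (X ω) * φ n (Y ω)) =
        (∫ ω, ψ n (X ω) * ψ n (Y ω)) + (∫ ω, ψ n (X ω) * Cf n (Y ω)) / c +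
          ((∫ ω, Cf n (X ω) * ψ n (Y ω)) / c +
            (∫ ω, Cf n (X ω) * Cf n (Y ω)) / c ^ 2) := by
      have : (fun ω => φ n (X ω) * φ n (Y ω)) = fun ω =>
          ψ n (X ω) * ψ n (Y ω) + (ψ n (X ω) * Cf n (Y ω)) / c +
            ((Cf n (X ω) * ψ n (Y ω)) / c + (Cf n (X ω) * Cf n (Y ω)) / c ^ 2) := by
        funext ω
        rw [hsplit (X ω), hsplit (Y ω)]
        field_simp
      have I1 : Integrable (fun ω => ψ n (X ω) * ψ n (Y ω) + ψ n (X ω) * Cf n (Y ω) / c) :=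
        iuv.add (iuq.div_const c)
      have I2 : Integrable (fun ω =>
          Cf n (X ω) * ψ n (Y ω) / c + Cf n (X ω) * Cf n (Y ω) / c ^ 2) :=
        (ipv.div_const c).add (ipq.div_const (c ^ 2))
      rw [this, integral_add I1 I2, integral_add iuv (iuq.div_const c),
        integral_add (ipv.div_const c) (ipq.div_const (c ^ 2)),
        integral_div, integral_div, integral_div]
    have expand2 : (∫ ω, φ n (X ω)) = (∫ ω, ψ n (X ω)) + (∫ ω, Cf n (X ω)) / c := by
      have : (fun ω => φ n (X ω)) = fun ω => ψ n (X ω) + Cf n (X ω) / c := by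
        funext ω; exact hsplit (X ω)
      rw [this, integral_add iu (ip.div_const c), integral_div]
    have expand3 : (∫ ω, φ n (Y ω)) = (∫ ω, ψ n (Y ω)) + (∫ ω, Cf n (Y ω)) / c := by
      have : (fun ω => φ n (Y ω)) = fun ω => ψ n (Y ω) + Cf n (Y ω) / c := by
        funext ω; exact hsplit (Y ω)
      rw [this, integral_add iv (iq.div_const c), integral_div]
    rw [expand1, expand2, expand3]
    have d1 : (0:ℝ) ≤ (∫ ω, ψ n (X ω) * ψ n (Y ω)) - (∫ ω, ψ n (X ω)) * ∫ ω, ψ n (Y ω) := by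
      linarith
    have d2 : (0:ℝ) ≤ ((∫ ω, ψ n (X ω) * Cf n (Y ω)) - (∫ ω, ψ n (X ω)) * ∫ ω, Cf n (Y ω)) / c :=
      div_nonneg (by linarith) hc.le
    have d3 : (0:ℝ) ≤ ((∫ ω, Cf n (X ω) * ψ n (Y ω)) - (∫ ω, Cf n (X ω)) * ∫ ω, ψ n (Y ω)) / c :=
      div_nonneg (by linarith) hc.le
    have hc2 : (0:ℝ) < c ^ 2 := by positivity
    set a1 := ∫ ω, ψ n (X ω) * ψ n (Y ω)
    set a2 := ∫ ω, ψ n (X ω) * Cf n (Y ω)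
    set a3 := ∫ ω, Cf n (X ω) * ψ n (Y ω)
    set a4 := ∫ ω, Cf n (X ω) * Cf n (Y ω)
    set b1 := ∫ ω, ψ n (X ω)
    set b2 := ∫ ω, ψ n (Y ω)
    set b3 := ∫ ω, Cf n (X ω)
    set b4 := ∫ ω, Cf n (Y ω)
    have expandgoal : a1 + a2 / c + (a3 / c + a4 / c ^ 2) - (b1 + b3 / c) * (b2 + b4 / c) -
        (a4 - b3 * b4) / c ^ 2 = (a1 - b1 * b2) + (a2 - b1 * b4) / c + (a3 - b3 * b2) / c := by
      field_simp
      ring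
    nlinarith [d1, d2, d3, expandgoal]
  -- X ≤ Cf n X when X ≤ c
  have hC_ge : ∀ n x, x ≤ c → x ≤ Cf n x := fun n x hxc =>
    le_min (le_max_left _ _) hxc
  -- eventual equality
  have hXev : ∀ᵐ ω ∂(volume : Measure Ω), ∀ᶠ n in atTop, Cf n (X ω) = X ω := by
    filter_upwards [hXae] with ω hω
    filter_upwards [he_tendsto.eventually (gt_mem_nhds hω.1)] with n hn
    exact hC_eq n (X ω) hω.2 hn.le
  have hYev : ∀ᵐ ω ∂(volume : Measure Ω), ∀ᶠ n in atTop, Cf n (Y ω) = Y ω := by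
    filter_upwards [hYae] with ω hω
    filter_upwards [he_tendsto.eventually (gt_mem_nhds hω.1)] with n hn
    exact hC_eq n (Y ω) hω.2 hn.le
  set k : ℝ := |Real.log c| with hk_def
  have hk0 : 0 ≤ k := abs_nonneg _
  -- bounds for φ composed, a.e.
  have hφX_bd : ∀ n, ∀ᵐ ω ∂(volume : Measure Ω),
      |φ n (X ω)| ≤ |Real.log (X ω)| + k := by
    intro n
    filter_upwards [hXae] with ω hω
    exact aux_abs_log_le hω.1 (hC_ge n (X ω) hω.2) (hC_ub n (X ω))
  have hφY_bd : ∀ n, ∀ᵐ ω ∂(volume : Measure Ω),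
      |φ n (Y ω)| ≤ |Real.log (Y ω)| + k := by
    intro n
    filter_upwards [hYae] with ω hω
    exact aux_abs_log_le hω.1 (hC_ge n (Y ω) hω.2) (hC_ub n (Y ω))
  -- integrable bounds
  have hbX : Integrable (fun ω => |Real.log (X ω)| + k) := hAX.add (integrable_const k)
  have hbY : Integrable (fun ω => |Real.log (Y ω)| + k) := hAY.add (integrable_const k)
  have hbXsq : Integrable (fun ω => (|Real.log (X ω)| + k) ^ 2) := by
    have : (fun ω => (|Real.log (X ω)| + k) ^ 2) =
        fun ω => Real.log (X ω) ^ 2 + (2 * k) * |Real.log (X ω)| + k ^ 2 := by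
      funext ω; rw [add_sq, sq_abs]; ring
    rw [this]
    exact (hlogX2.add (hAX.const_mul (2 * k))).add (integrable_const _)
  have hbYsq : Integrable (fun ω => (|Real.log (Y ω)| + k) ^ 2) := by
    have : (fun ω => (|Real.log (Y ω)| + k) ^ 2) =
        fun ω => Real.log (Y ω) ^ 2 + (2 * k) * |Real.log (Y ω)| + k ^ 2 := by
      funext ω; rw [add_sq, sq_abs]; ring
    rw [this]
    exact (hlogY2.add (hAY.const_mul (2 * k))).add (integrable_const _)
  have hbXY : Integrable (fun ω => (|Real.log (X ω)| + k) * (|Real.log (Y ω)| + k)) := by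
    have hGI : Integrable (fun ω =>
        ((|Real.log (X ω)| + k) ^ 2 + (|Real.log (Y ω)| + k) ^ 2) / 2) :=
      (hbXsq.add hbYsq).div_const 2
    refine hGI.mono'
      ((hlXm.abs.add measurable_const).mul (hlYm.abs.add measurable_const)).aestronglyMeasurable ?_
    filter_upwards with ω
    rw [Real.norm_eq_abs]
    have h1 : 0 ≤ |Real.log (X ω)| + k := by positivity
    have h2 : 0 ≤ |Real.log (Y ω)| + k := by positivity
    rw [abs_of_nonneg (mul_nonneg h1 h2)]
    nlinarith [sq_nonneg ((|Real.log (X ω)| + k) - (|Real.log (Y ω)| + k))]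
  -- DCT: φ side
  have T2 : Tendsto (fun n => ∫ ω, φ n (X ω)) atTop (𝓝 (∫ ω, Real.log (X ω))) := by
    refine tendsto_integral_of_dominated_convergence _
      (fun n => ((hφ_meas n).comp hXmeas).aestronglyMeasurable) hbX
      (fun n => by simpa [Real.norm_eq_abs] using hφX_bd n) ?_
    filter_upwards [hXev] with ω hω
    exact tendsto_const_nhds.congr' (hω.mono fun n hn => (congrArg Real.log hn).symm)
  have T3 : Tendsto (fun n => ∫ ω, φ n (Y ω)) atTop (𝓝 (∫ ω, Real.log (Y ω))) := by
    refine tendsto_integral_of_dominated_convergence _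
      (fun n => ((hφ_meas n).comp hYmeas).aestronglyMeasurable) hbY
      (fun n => by simpa [Real.norm_eq_abs] using hφY_bd n) ?_
    filter_upwards [hYev] with ω hω
    exact tendsto_const_nhds.congr' (hω.mono fun n hn => (congrArg Real.log hn).symm)
  have T1 : Tendsto (fun n => ∫ ω, φ n (X ω) * φ n (Y ω)) atTop
      (𝓝 (∫ ω, Real.log (X ω) * Real.log (Y ω))) := by
    refine tendsto_integral_of_dominated_convergence _
      (fun n => (((hφ_meas n).comp hXmeas).mul ((hφ_meas n).comp hYmeas)).aestronglyMeasurable)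
      hbXY ?_ ?_
    · intro n
      filter_upwards [hφX_bd n, hφY_bd n] with ω h1 h2
      rw [Real.norm_eq_abs, abs_mul]
      exact mul_le_mul h1 h2 (abs_nonneg _) (by positivity)
    · filter_upwards [hXev, hYev] with ω h1 h2
      refine tendsto_const_nhds.congr' ?_
      filter_upwards [h1, h2] with n hn1 hn2
      rw [hφ_def]
      simp only [hn1, hn2]
  -- DCT: Cf side
  have S2 : Tendsto (fun n => ∫ ω, Cf n (X ω)) atTop (𝓝 (∫ ω, X ω)) := by
    refine tendsto_integral_of_dominated_convergence (fun _ => c)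
      (fun n => ((hC_meas n).comp hXmeas).aestronglyMeasurable) (integrable_const c)
      (fun n => Filter.Eventually.of_forall fun ω => ?_) ?_
    · rw [Real.norm_eq_abs, abs_of_pos (hC_pos n (X ω))]; exact hC_ub n (X ω)
    · filter_upwards [hXev] with ω hω
      exact tendsto_const_nhds.congr' (hω.mono fun n hn => hn.symm)
  have S3 : Tendsto (fun n => ∫ ω, Cf n (Y ω)) atTop (𝓝 (∫ ω, Y ω)) := by
    refine tendsto_integral_of_dominated_convergence (fun _ => c)
      (fun n => ((hC_meas n).comp hYmeas).aestronglyMeasurable) (integrable_const c)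
      (fun n => Filter.Eventually.of_forall fun ω => ?_) ?_
    · rw [Real.norm_eq_abs, abs_of_pos (hC_pos n (Y ω))]; exact hC_ub n (Y ω)
    · filter_upwards [hYev] with ω hω
      exact tendsto_const_nhds.congr' (hω.mono fun n hn => hn.symm)
  have S1 : Tendsto (fun n => ∫ ω, Cf n (X ω) * Cf n (Y ω)) atTop
      (𝓝 (∫ ω, X ω * Y ω)) := by
    refine tendsto_integral_of_dominated_convergence (fun _ => c * c)
      (fun n => (((hC_meas n).comp hXmeas).mul ((hC_meas n).comp hYmeas)).aestronglyMeasurable)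
      (integrable_const (c * c))
      (fun n => Filter.Eventually.of_forall fun ω => ?_) ?_
    · rw [Real.norm_eq_abs, abs_mul, abs_of_pos (hC_pos n (X ω)), abs_of_pos (hC_pos n (Y ω))]
      exact mul_le_mul (hC_ub n (X ω)) (hC_ub n (Y ω)) (hC_pos n (Y ω)).le hc.le
    · filter_upwards [hXev, hYev] with ω h1 h2
      refine tendsto_const_nhds.congr' ?_
      filter_upwards [h1, h2] with n hn1 hn2
      rw [hn1, hn2]
  -- pass to the limit
  have hL : Tendsto (fun n => (∫ ω, φ n (X ω) * φ n (Y ω)) -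
      (∫ ω, φ n (X ω)) * ∫ ω, φ n (Y ω)) atTop
      (𝓝 ((∫ ω, Real.log (X ω) * Real.log (Y ω)) -
        (∫ ω, Real.log (X ω)) * ∫ ω, Real.log (Y ω))) := T1.sub (T2.mul T3)
  have hR : Tendsto (fun n => ((∫ ω, Cf n (X ω) * Cf n (Y ω)) -
      (∫ ω, Cf n (X ω)) * ∫ ω, Cf n (Y ω)) / c ^ 2) atTop
      (𝓝 (((∫ ω, X ω * Y ω) - (∫ ω, X ω) * ∫ ω, Y ω) / c ^ 2)) :=
    (S1.sub (S2.mul S3)).div_const _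
  have main : ((∫ ω, X ω * Y ω) - (∫ ω, X ω) * ∫ ω, Y ω) / c ^ 2 ≤
      (∫ ω, Real.log (X ω) * Real.log (Y ω)) -
        (∫ ω, Real.log (X ω)) * ∫ ω, Real.log (Y ω) :=
    le_of_tendsto_of_tendsto' hR hL key
  -- Cov(X,Y) ≥ 0
  have iX : Integrable X := by
    refine aux_int_of_bdd hXmeas.aestronglyMeasurable (M := c) ?_
    filter_upwards [hXae] with ω hω
    rw [abs_of_pos hω.1]; exact hω.2
  have iY : Integrable Y := by
    refine aux_int_of_bdd hYmeas.aestronglyMeasurable (M := c) ?_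
    filter_upwards [hYae] with ω hω
    rw [abs_of_pos hω.1]; exact hω.2
  have iXY : Integrable (fun ω => X ω * Y ω) := by
    refine aux_int_of_bdd (hXmeas.mul hYmeas).aestronglyMeasurable (M := c * c) ?_
    filter_upwards [hXae, hYae] with ω h1 h2
    rw [abs_mul, abs_of_pos h1.1, abs_of_pos h2.1]
    exact mul_le_mul h1.2 h2.2 h2.1.le hc.le
  have pa0 := hPA (fun z => z.1) (fun z => z.2)
    (fun a b hab => hab.1) (fun a b hab => hab.2) iX iY iXY
  have hcov_nonneg : 0 ≤ (∫ ω, X ω * Y ω) - (∫ ω, X ω) * ∫ ω, Y ω := by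
    simpa using sub_nonneg.mpr pa0
  have hstep : ((∫ ω, X ω * Y ω) - (∫ ω, X ω) * ∫ ω, Y ω) / (2 * c ^ 2) ≤
      ((∫ ω, X ω * Y ω) - (∫ ω, X ω) * ∫ ω, Y ω) / c ^ 2 :=
    div_le_div_of_nonneg_left hcov_nonneg (by positivity) (by nlinarith)
  linarith
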